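/- arXiv:1312.2252 — 4 statements merged into one kernel-verified Lean document; each statement's English description precedes it below -/
import Mathlib

section
/- Let F : [0,T] → [0,x_f] be an increasing C¹ surjective function with F(0)=0, and let F⁻¹ be its generalized inverse F⁻¹(x) = inf{t : F(t)=x}. Then the composite function v = F' ∘ F⁻¹ is continuous on [0,x_f]. -/
open Set Filter Topology

/-- The composite `v = F' ∘ F⁻¹` (with `F⁻¹` the generalized inverse) is
continuous on `[0, x_f]` for an increasing C¹ surjective `F` with `F 0 = 0`. -/
theorem stmt_1 (T xf : ℝ) (hT : 0 < T) (hxf : 0 < xf)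
    (F F' : ℝ → ℝ)
    (hmono : MonotoneOn F (Icc 0 T))
    (hderiv : ∀ t ∈ Icc 0 T, HasDerivWithinAt F (F' t) (Icc 0 T) t)
    (hF'cont : ContinuousOn F' (Icc 0 T))
    (hF0 : F 0 = 0) (hFT : F T = xf)
    (Finv : ℝ → ℝ)
    (hFinv : ∀ x, Finv x = sInf {t | t ∈ Icc 0 T ∧ F t = x}) :
    ContinuousOn (fun x => F' (Finv x)) (Icc 0 xf) := by
  have hFc : ContinuousOn F (Icc 0 T) := fun t ht => (hderiv t ht).continuousWithinAt
  -- basic properties of the generalized inverse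
  have hS : ∀ x ∈ Icc 0 xf, Finv x ∈ Icc 0 T ∧ F (Finv x) = x ∧
      ∀ t ∈ Icc 0 T, F t = x → Finv x ≤ t := by
    intro x hx
    have hne : {t | t ∈ Icc 0 T ∧ F t = x}.Nonempty := by
      have h1 : Icc (F 0) (F T) ⊆ F '' Icc 0 T := intermediate_value_Icc hT.le hFc
      rw [hF0, hFT] at h1
      obtain ⟨t, ht, hFt⟩ := h1 hx
      exact ⟨t, ht, hFt⟩
    have hcl : IsClosed {t | t ∈ Icc 0 T ∧ F t = x} := by
      exact hFc.preimage_isClosed_of_isClosed isClosed_Icc (isClosed_singleton (x := x))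
    have hcomp : IsCompact {t | t ∈ Icc 0 T ∧ F t = x} :=
      isCompact_Icc.of_isClosed_subset hcl (fun t ht => ht.1)
    have hmem : sInf {t | t ∈ Icc 0 T ∧ F t = x} ∈ {t | t ∈ Icc 0 T ∧ F t = x} :=
      hcomp.sInf_mem hne
    rw [hFinv x]
    refine ⟨hmem.1, hmem.2, fun t ht hFt => ?_⟩
    exact csInf_le ⟨0, fun s hs => hs.1.1⟩ ⟨ht, hFt⟩
  -- the derivative vanishes on intervals where F is constant
  have hzero : ∀ a b t : ℝ, a ∈ Icc 0 T → b ∈ Icc 0 T → a < b →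
      (∀ u ∈ Icc a b, F u = F a) → t ∈ Icc a b → F' t = 0 := by
    intro a b t ha hb hab hconst ht
    have hsub : Icc a b ⊆ Icc 0 T := Icc_subset_Icc ha.1 hb.2
    have hd : HasDerivWithinAt F (F' t) (Icc a b) t := (hderiv t (hsub ht)).mono hsub
    have hd' : HasDerivWithinAt (fun _ : ℝ => F a) (F' t) (Icc a b) t :=
      hd.congr (fun u hu => (hconst u hu).symm) (hconst t ht).symm
    have hc : HasDerivWithinAt (fun _ : ℝ => F a) 0 (Icc a b) t :=
      hasDerivWithinAt_const t _ (F a)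
    exact ((uniqueDiffOn_Icc hab) t ht).eq_deriv _ hd' hc
  -- key lemma: F' is constant on level sets of F (relative to Finv)
  have hkey : ∀ x ∈ Icc 0 xf, ∀ s ∈ Icc 0 T, F s = x → F' s = F' (Finv x) := by
    intro x hx s hsT hFs
    obtain ⟨ht0T, hFt0, hle⟩ := hS x hx
    rcases eq_or_lt_of_le (hle s hsT hFs) with heq | hlt
    · rw [heq]
    · have hconst : ∀ u ∈ Icc (Finv x) s, F u = F (Finv x) := by
        intro u hu
        have huT : u ∈ Icc 0 T := Icc_subset_Icc ht0T.1 hsT.2 hu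
        have h1 : F (Finv x) ≤ F u := hmono ht0T huT hu.1
        have h2 : F u ≤ F s := hmono huT hsT hu.2
        rw [hFt0]; rw [hFs] at h2; linarith
      have h1 : F' s = 0 := hzero (Finv x) s s ht0T hsT hlt hconst ⟨hlt.le, le_refl s⟩
      have h2 : F' (Finv x) = 0 :=
        hzero (Finv x) s (Finv x) ht0T hsT hlt hconst ⟨le_refl _, hlt.le⟩
      rw [h1, h2]
  -- main sequential argument
  intro x₀ hx₀
  rw [ContinuousWithinAt]
  apply tendsto_of_subseq_tendsto
  intro ns hns
  obtain ⟨hns0, hmemev⟩ := tendsto_nhdsWithin_iff.mp hns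
  have htmem : ∀ᶠ n in atTop, Finv (ns n) ∈ Icc 0 T := hmemev.mono fun n hn => (hS _ hn).1
  obtain ⟨s, hsT, φ, hφ, hφt⟩ :=
    isCompact_Icc.tendsto_subseq' (x := fun n => Finv (ns n)) htmem.frequently
  refine ⟨φ, ?_⟩
  have hmemφ : ∀ᶠ n in atTop, ns (φ n) ∈ Icc 0 xf := hφ.tendsto_atTop.eventually hmemev
  have hFt : ∀ᶠ n in atTop, F (Finv (ns (φ n))) = ns (φ n) :=
    hmemφ.mono fun n hn => (hS _ hn).2.1
  have htφT : ∀ᶠ n in atTop, Finv (ns (φ n)) ∈ Icc 0 T :=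
    hmemφ.mono fun n hn => (hS _ hn).1
  have htend : Tendsto (fun n => Finv (ns (φ n))) atTop (𝓝[Icc 0 T] s) :=
    tendsto_nhdsWithin_iff.mpr ⟨hφt, htφT⟩
  have hFs : F s = x₀ := by
    have h1 : Tendsto (fun n => F (Finv (ns (φ n)))) atTop (𝓝 (F s)) :=
      ((hFc s hsT).tendsto).comp htend
    have h2 : Tendsto (fun n => F (Finv (ns (φ n)))) atTop (𝓝 x₀) :=
      (hns0.comp hφ.tendsto_atTop).congr' (hFt.mono fun n hn => hn.symm)
    exact tendsto_nhds_unique h1 h2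
  have hfin : Tendsto (fun n => F' (Finv (ns (φ n)))) atTop (𝓝 (F' s)) :=
    ((hF'cont s hsT).tendsto).comp htend
  rw [hkey x₀ hx₀ s hsT hFs] at hfin
  exact hfin
end

section
/- Let F : [0,T] → [0,x_f] be C², strictly increasing, surjective with F(0)=0, and suppose there is t₀ ∈ (0,T) with F'(t₀)=0, F'''(t₀) existing and nonzero. Set x₀ = F(t₀) and v = F' ∘ F⁻¹ where F⁻¹ is the (ordinary) inverse of F. Then v is not differentiable at x₀. -/
/-!
If `v = F' ∘ F⁻¹` were differentiable at `x₀ = F t₀`, then, since `v x₀ = F' t₀ = 0`, it would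
satisfy `|v x| ≤ K |x - x₀|` near `x₀`; composing with `F` gives `|F' t| ≤ K |F t - F t₀|` near
`t₀`. By Grönwall's inequality `F - F t₀` then vanishes on a right neighbourhood of `t₀`: the
trajectory `t ↦ F t` of `ẋ = v x` cannot leave the equilibrium `x₀` of a field that is Lipschitz
there. This contradicts the strict monotonicity of `F`.
-/

open Set Filter Topology

theorem eventually_nhdsGE_eq_of_norm_deriv_le_mul_norm_sub {E : Type*} [NormedAddCommGroup E]
    [NormedSpace ℝ E] {f f' : ℝ → E} {a K : ℝ} (hf : ∀ᶠ t in 𝓝 a, HasDerivAt f (f' t) t)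
    (hbound : ∀ᶠ t in 𝓝 a, ‖f' t‖ ≤ K * ‖f t - f a‖) :
    ∀ᶠ t in 𝓝[≥] a, f t = f a := by
  obtain ⟨b, hab, hsub⟩ := mem_nhdsGE_iff_exists_Icc_subset.1 (nhdsWithin_le_nhds (hf.and hbound))
  filter_upwards [Icc_mem_nhdsGE hab] with t ht
  refine sub_eq_zero.1 <| eq_zero_of_abs_deriv_le_mul_abs_self_of_eq_zero_right
    (f := fun t => f t - f a) (f' := f') (K := K) ?_ ?_ (sub_self _) ?_ t ht
  · exact fun s hs => ((hsub hs).1.continuousAt.sub continuousAt_const).continuousWithinAt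
  · exact fun s hs => ((hsub (Ico_subset_Icc_self hs)).1.sub_const (f a)).hasDerivWithinAt
  · exact fun s hs => (hsub (Ico_subset_Icc_self hs)).2

theorem stmt_4_general (T xf : ℝ)
    (F F' : ℝ → ℝ)
    (hsm : StrictMonoOn F (Icc 0 T))
    (hd1 : ∀ t ∈ Icc 0 T, HasDerivWithinAt F (F' t) (Icc 0 T) t)
    (hF0 : F 0 = 0) (hFT : F T = xf)
    (t₀ : ℝ) (ht₀ : t₀ ∈ Ioo 0 T) (hF't₀ : F' t₀ = 0)
    (Finv : ℝ → ℝ)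
    (hFinvF : ∀ t ∈ Icc 0 T, Finv (F t) = t) :
    ¬ DifferentiableWithinAt ℝ (fun x => F' (Finv x)) (Icc 0 xf) (F t₀) := by
  intro hdiff
  have ht₀I : t₀ ∈ Icc 0 T := Ioo_subset_Icc_self ht₀
  have hI : Icc 0 T ∈ 𝓝 t₀ := Icc_mem_nhds ht₀.1 ht₀.2
  have hderiv : ∀ᶠ t in 𝓝 t₀, HasDerivAt F (F' t) t := by
    filter_upwards [isOpen_Ioo.mem_nhds ht₀] with t ht
    exact (hd1 t (Ioo_subset_Icc_self ht)).hasDerivAt (Icc_mem_nhds ht.1 ht.2)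
  have hmaps : MapsTo F (Icc 0 T) (Icc 0 xf) := by
    simpa only [hF0, hFT] using hsm.monotoneOn.mapsTo_Icc
  have htendsto : Tendsto F (𝓝 t₀) (𝓝[Icc 0 xf] (F t₀)) :=
    tendsto_nhdsWithin_iff.2 ⟨hderiv.self_of_nhds.continuousAt, mem_of_superset hI hmaps⟩
  obtain ⟨K, hK⟩ := hdiff.isBigO_sub.bound
  have hbound : ∀ᶠ t in 𝓝 t₀, ‖F' t‖ ≤ K * ‖F t - F t₀‖ := by
    filter_upwards [htendsto.eventually hK, hI] with t ht htI
    simpa [hFinvF t htI, hFinvF t₀ ht₀I, hF't₀] using ht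
  have hright : ∀ᶠ t in 𝓝[>] t₀, F t = F t₀ ∧ t ∈ Icc 0 T ∧ t₀ < t := by
    filter_upwards [(eventually_nhdsGE_eq_of_norm_deriv_le_mul_norm_sub hderiv hbound).filter_mono
      (nhdsWithin_mono _ Ioi_subset_Ici_self), mem_nhdsWithin_of_mem_nhds hI,
      self_mem_nhdsWithin] with t hFt htI ht₀t
    exact ⟨hFt, htI, ht₀t⟩
  obtain ⟨t, hFt, htI, ht₀t⟩ := hright.exists
  exact (hsm ht₀I htI ht₀t).ne hFt.symm

/-- Non-differentiability of the space-speed profile `v = F' ∘ F⁻¹` at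
`x₀ = F t₀` when `t₀` is an interior degenerate critical point of the strictly
increasing C² function `F` with nonzero third derivative at `t₀`. -/
theorem stmt_4 (T xf : ℝ) (hT : 0 < T) (hxf : 0 < xf)
    (F F' F'' : ℝ → ℝ) (F₃ : ℝ)
    (hsm : StrictMonoOn F (Icc 0 T))
    (hd1 : ∀ t ∈ Icc 0 T, HasDerivWithinAt F (F' t) (Icc 0 T) t)
    (hd2 : ∀ t ∈ Icc 0 T, HasDerivWithinAt F' (F'' t) (Icc 0 T) t)
    (hF''cont : ContinuousOn F'' (Icc 0 T))
    (hF0 : F 0 = 0) (hFT : F T = xf)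
    (t₀ : ℝ) (ht₀ : t₀ ∈ Ioo 0 T) (hF't₀ : F' t₀ = 0)
    (hd3 : HasDerivWithinAt F'' F₃ (Icc 0 T) t₀) (hF₃ : F₃ ≠ 0)
    (Finv : ℝ → ℝ)
    (hFinvF : ∀ t ∈ Icc 0 T, Finv (F t) = t)
    (hFFinv : ∀ x ∈ Icc 0 xf, F (Finv x) = x) :
    ¬ DifferentiableWithinAt ℝ (fun x => F' (Finv x)) (Icc 0 xf) (F t₀) :=
  stmt_4_general T xf F F' hsm hd1 hF0 hFT t₀ ht₀ hF't₀ Finv hFinvF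
end

section
/- Let F : [0,T] → ℝ be C², strictly increasing, with interior point t₀ where F'(t₀) = 0, F''(t₀)=0, and F'''(t₀) exists with F'''(t₀) > 0. Then the graph of v = F' ∘ F⁻¹ has a vertical half-tangent at x₀ = F(t₀): the one-sided difference quotients (v(x₀+h) − v(x₀))/h tend to +∞ as h → 0⁺ and to −∞ as h → 0⁻. -/
/-!
Near `t₀`, integrating the first-order expansion `F''(t) ~ F₃ (t - t₀)` twice gives
`F'(t) ~ F₃/2 (t - t₀)²` and `F(t) - F(t₀) ~ F₃/6 (t - t₀)³`. Writing `t = F⁻¹(x₀ + h)`, the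
difference quotient of `v = F' ∘ F⁻¹` is `F'(t) / (F(t) - F(t₀)) ~ 3 / (t - t₀)`, and `t - t₀`
has the sign of `h` and tends to `0` because a strictly monotone inverse is continuous.
-/

open Set Filter Topology Asymptotics

theorem HasDerivAt.isEquivalent_of_eq_zero {f : ℝ → ℝ} {c x : ℝ} (hf : HasDerivAt f c x)
    (hc : c ≠ 0) (hx : f x = 0) : f ~[𝓝 x] fun y => c * (y - x) := by
  simpa [hx, mul_comm, Function.comp_def] using hf.isEquivalent_sub hc

theorem isLittleO_pow_succ_of_hasDerivAt {E : Type*} [NormedAddCommGroup E] [NormedSpace ℝ E]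
    {f f' : ℝ → E} {x : ℝ} {n : ℕ} (hf : ∀ᶠ y in 𝓝 x, HasDerivAt f (f' y) y) (hx : f x = 0)
    (hf' : f' =o[𝓝 x] fun y => (y - x) ^ n) : f =o[𝓝 x] fun y => (y - x) ^ (n + 1) := by
  refine isLittleO_iff.2 fun c hc => ?_
  obtain ⟨ε, hε, hball⟩ := Metric.eventually_nhds_iff_ball.1 (hf.and (hf'.bound hc))
  refine Metric.eventually_nhds_iff_ball.2 ⟨ε, hε, fun y hy => ?_⟩
  have hseg : ∀ z ∈ uIcc x y, |z - x| ≤ |y - x| := fun z hz => abs_sub_left_of_mem_uIcc hz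
  have hmem : ∀ z ∈ uIcc x y, z ∈ Metric.ball x ε := fun z hz =>
    (hseg z hz).trans_lt (Metric.mem_ball.1 hy)
  have hmvt := (convex_uIcc x y).norm_image_sub_le_of_norm_hasDerivWithin_le
    (C := c * ‖(y - x) ^ n‖) (fun z hz => (hball z (hmem z hz)).1.hasDerivWithinAt)
    (fun z hz => (hball z (hmem z hz)).2.trans <| by
      simp only [norm_pow, Real.norm_eq_abs]
      exact mul_le_mul_of_nonneg_left (pow_le_pow_left₀ (abs_nonneg _) (hseg z hz) n) hc.le)
    left_mem_uIcc right_mem_uIcc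
  rw [hx, sub_zero] at hmvt
  calc ‖f y‖ ≤ c * ‖(y - x) ^ n‖ * ‖y - x‖ := hmvt
    _ = c * ‖(y - x) ^ (n + 1)‖ := by rw [pow_succ, norm_mul, mul_assoc]

theorem Asymptotics.IsEquivalent.pow_succ_of_hasDerivAt {f f' : ℝ → ℝ} {x c : ℝ} {n : ℕ}
    (hc : c ≠ 0) (hf' : f' ~[𝓝 x] fun y => c * (y - x) ^ n)
    (hf : ∀ᶠ y in 𝓝 x, HasDerivAt f (f' y) y) (hx : f x = 0) :
    f ~[𝓝 x] fun y => c / (n + 1) * (y - x) ^ (n + 1) := by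
  have hp : ∀ y, HasDerivAt (fun y => c / (n + 1) * (y - x) ^ (n + 1)) (c * (y - x) ^ n) y := by
    intro y
    refine ((((hasDerivAt_id y).sub_const x).pow (n + 1)).const_mul (c / (n + 1))).congr_deriv ?_
    simp only [id, Nat.add_sub_cancel, mul_one, Nat.cast_add_one]
    field_simp
  have hrem := isLittleO_pow_succ_of_hasDerivAt (hf.mono fun y hy => hy.sub (hp y))
    (by simp [hx]) ((isLittleO_const_mul_right_iff hc).1 hf')
  exact (isLittleO_const_mul_right_iff (div_ne_zero hc n.cast_add_one_ne_zero)).2 hrem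

theorem tendsto_div_of_isEquivalent_pow {f g : ℝ → ℝ} {x c : ℝ} {n : ℕ} (hc : c ≠ 0)
    (hf : f ~[𝓝 x] fun y => c * (y - x) ^ n)
    (hg : g ~[𝓝 x] fun y => c / (n + 1) * (y - x) ^ (n + 1)) :
    Tendsto (fun y => f y / g y) (𝓝[>] x) atTop ∧
      Tendsto (fun y => f y / g y) (𝓝[<] x) atBot := by
  have hratio : (fun y => (n + 1) * (y - x)⁻¹) ~[𝓝[≠] x] fun y => f y / g y := by
    refine (((hf.div hg).mono nhdsWithin_le_nhds).congr_right ?_).symm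
    filter_upwards [self_mem_nhdsWithin] with y hy
    have : y - x ≠ 0 := sub_ne_zero.2 hy
    simp only [Pi.div_apply]
    field_simp
    ring
  have hn : (0 : ℝ) < n + 1 := n.cast_add_one_pos
  constructor
  · refine (hratio.mono (nhdsWithin_mono _ fun y hy => ne_of_gt hy)).tendsto_atTop ?_
    refine Tendsto.const_mul_atTop hn (tendsto_inv_nhdsGT_zero.comp ?_)
    exact (map_subRight_nhdsGT (c := x) (a := x)).trans_le (by rw [sub_self])
  · refine (hratio.mono (nhdsWithin_mono _ fun y hy => ne_of_lt hy)).tendsto_atBot ?_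
    refine Tendsto.const_mul_atBot hn (tendsto_inv_nhdsLT_zero.comp ?_)
    exact (map_subRight_nhdsLT (c := x) (a := x)).trans_le (by rw [sub_self])

theorem StrictMonoOn.tendsto_nhdsGT {α β : Type*} [TopologicalSpace α] [Preorder α]
    [TopologicalSpace β] [Preorder β] {g : α → β} {s : Set α} {x : α} (hg : StrictMonoOn g s)
    (hs : s ∈ 𝓝 x) (hgx : ContinuousAt g x) : Tendsto g (𝓝[>] x) (𝓝[>] g x) :=
  tendsto_nhdsWithin_iff.2 ⟨hgx.tendsto.mono_left nhdsWithin_le_nhds, by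
    filter_upwards [self_mem_nhdsWithin, mem_nhdsWithin_of_mem_nhds hs] with y hxy hy
    exact hg (mem_of_mem_nhds hs) hy hxy⟩

theorem StrictMonoOn.tendsto_nhdsLT {α β : Type*} [TopologicalSpace α] [Preorder α]
    [TopologicalSpace β] [Preorder β] {g : α → β} {s : Set α} {x : α} (hg : StrictMonoOn g s)
    (hs : s ∈ 𝓝 x) (hgx : ContinuousAt g x) : Tendsto g (𝓝[<] x) (𝓝[<] g x) :=
  tendsto_nhdsWithin_iff.2 ⟨hgx.tendsto.mono_left nhdsWithin_le_nhds, by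
    filter_upwards [self_mem_nhdsWithin, mem_nhdsWithin_of_mem_nhds hs] with y hxy hy
    exact hg hy (mem_of_mem_nhds hs) hxy⟩

theorem HasDerivWithinAt.eventually_hasDerivAt_of_Icc {f f' : ℝ → ℝ} {a b x : ℝ}
    (hf : ∀ t ∈ Icc a b, HasDerivWithinAt f (f' t) (Icc a b) t) (hx : x ∈ Ioo a b) :
    ∀ᶠ t in 𝓝 x, HasDerivAt f (f' t) t := by
  filter_upwards [isOpen_Ioo.mem_nhds hx] with t ht
  exact (hf t (Ioo_subset_Icc_self ht)).hasDerivAt (Icc_mem_nhds ht.1 ht.2)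

section InverseOnIcc

variable {a b : ℝ} {F G : ℝ → ℝ}

theorem mapsTo_Icc_of_leftInvOn (hab : a ≤ b) (hFc : ContinuousOn F (Icc a b))
    (hl : LeftInvOn G F (Icc a b)) : MapsTo G (Icc (F a) (F b)) (Icc a b) := by
  intro x hx
  obtain ⟨t, ht, rfl⟩ := intermediate_value_Icc hab hFc hx
  rwa [hl ht]

theorem strictMonoOn_Icc_of_invOn (hab : a ≤ b) (hF : StrictMonoOn F (Icc a b))
    (hFc : ContinuousOn F (Icc a b)) (hl : LeftInvOn G F (Icc a b))
    (hr : RightInvOn G F (Icc (F a) (F b))) : StrictMonoOn G (Icc (F a) (F b)) :=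
  fun x hx y hy hxy => by
    have hmaps := mapsTo_Icc_of_leftInvOn hab hFc hl
    rwa [← hF.lt_iff_lt (hmaps hx) (hmaps hy), hr hx, hr hy]

theorem StrictMonoOn.Icc_mem_nhds_apply (hF : StrictMonoOn F (Icc a b)) {t : ℝ}
    (ht : t ∈ Ioo a b) : Icc (F a) (F b) ∈ 𝓝 (F t) :=
  have hab : a ≤ b := (ht.1.trans ht.2).le
  Icc_mem_nhds (hF (left_mem_Icc.2 hab) (Ioo_subset_Icc_self ht) ht.1)
    (hF (Ioo_subset_Icc_self ht) (right_mem_Icc.2 hab) ht.2)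

theorem continuousAt_of_invOn_Icc (hF : StrictMonoOn F (Icc a b))
    (hFc : ContinuousOn F (Icc a b)) (hl : LeftInvOn G F (Icc a b))
    (hr : RightInvOn G F (Icc (F a) (F b))) {t : ℝ} (ht : t ∈ Ioo a b) :
    ContinuousAt G (F t) := by
  have hab : a ≤ b := (ht.1.trans ht.2).le
  have htIcc := Ioo_subset_Icc_self ht
  refine continuousAt_of_monotoneOn_of_image_mem_nhds
    (strictMonoOn_Icc_of_invOn hab hF hFc hl hr).monotoneOn
    (hF.Icc_mem_nhds_apply ht) ?_
  rw [hl htIcc]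
  refine mem_of_superset (Icc_mem_nhds ht.1 ht.2) ?_
  calc Icc a b = G '' (F '' Icc a b) := hl.image_image.symm
    _ ⊆ G '' Icc (F a) (F b) := image_mono hF.monotoneOn.image_Icc_subset

theorem tendsto_nhdsGT_of_invOn_Icc (hF : StrictMonoOn F (Icc a b))
    (hFc : ContinuousOn F (Icc a b)) (hl : LeftInvOn G F (Icc a b))
    (hr : RightInvOn G F (Icc (F a) (F b))) {t : ℝ} (ht : t ∈ Ioo a b) :
    Tendsto G (𝓝[>] (F t)) (𝓝[>] t) := by
  have hG := (strictMonoOn_Icc_of_invOn (ht.1.trans ht.2).le hF hFc hl hr).tendsto_nhdsGT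
    (hF.Icc_mem_nhds_apply ht) (continuousAt_of_invOn_Icc hF hFc hl hr ht)
  rwa [hl (Ioo_subset_Icc_self ht)] at hG

theorem tendsto_nhdsLT_of_invOn_Icc (hF : StrictMonoOn F (Icc a b))
    (hFc : ContinuousOn F (Icc a b)) (hl : LeftInvOn G F (Icc a b))
    (hr : RightInvOn G F (Icc (F a) (F b))) {t : ℝ} (ht : t ∈ Ioo a b) :
    Tendsto G (𝓝[<] (F t)) (𝓝[<] t) := by
  have hG := (strictMonoOn_Icc_of_invOn (ht.1.trans ht.2).le hF hFc hl hr).tendsto_nhdsLT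
    (hF.Icc_mem_nhds_apply ht) (continuousAt_of_invOn_Icc hF hFc hl hr ht)
  rwa [hl (Ioo_subset_Icc_self ht)] at hG

end InverseOnIcc

theorem stmt_5_general
    (T : ℝ)
    (F F' F'' : ℝ → ℝ) (F₃ : ℝ)
    (hsm : StrictMonoOn F (Icc 0 T))
    (hd1 : ∀ t ∈ Icc 0 T, HasDerivWithinAt F (F' t) (Icc 0 T) t)
    (hd2 : ∀ t ∈ Icc 0 T, HasDerivWithinAt F' (F'' t) (Icc 0 T) t)
    (t₀ : ℝ) (ht₀ : t₀ ∈ Ioo 0 T) (hF't₀ : F' t₀ = 0) (hF''t₀ : F'' t₀ = 0)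
    (hd3 : HasDerivWithinAt F'' F₃ (Icc 0 T) t₀) (hF₃ : 0 < F₃)
    (Finv : ℝ → ℝ)
    (hFinvF : ∀ t ∈ Icc 0 T, Finv (F t) = t)
    (hFFinv : ∀ x ∈ Icc (F 0) (F T), F (Finv x) = x) :
    Tendsto (fun h : ℝ => (F' (Finv (F t₀ + h)) - F' (Finv (F t₀))) / h)
        (nhdsWithin 0 (Ioi 0)) atTop ∧
    Tendsto (fun h : ℝ => (F' (Finv (F t₀ + h)) - F' (Finv (F t₀))) / h)
        (nhdsWithin 0 (Iio 0)) atBot := by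
  have hFc : ContinuousOn F (Icc 0 T) := fun t ht => (hd1 t ht).continuousWithinAt
  have hF'' : F'' ~[𝓝 t₀] fun t => F₃ * (t - t₀) ^ 1 := by
    simpa only [pow_one] using
      (hd3.hasDerivAt (Icc_mem_nhds ht₀.1 ht₀.2)).isEquivalent_of_eq_zero hF₃.ne' hF''t₀
  have hF' := hF''.pow_succ_of_hasDerivAt hF₃.ne'
    (HasDerivWithinAt.eventually_hasDerivAt_of_Icc hd2 ht₀) hF't₀
  have hF := hF'.pow_succ_of_hasDerivAt (div_ne_zero hF₃.ne' (by positivity))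
    ((HasDerivWithinAt.eventually_hasDerivAt_of_Icc hd1 ht₀).mono fun t ht => ht.sub_const (F t₀))
    (sub_self _)
  obtain ⟨hright, hleft⟩ := tendsto_div_of_isEquivalent_pow
    (div_ne_zero hF₃.ne' (by positivity)) hF' hF
  have hquot : ∀ᶠ h in 𝓝 0, F' (Finv (F t₀ + h)) / (F (Finv (F t₀ + h)) - F t₀) =
      (F' (Finv (F t₀ + h)) - F' (Finv (F t₀))) / h := by
    have hshift : Tendsto (F t₀ + ·) (𝓝 0) (𝓝 (F t₀)) := by
      simpa using (continuous_const_add (F t₀)).tendsto 0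
    filter_upwards [hshift.eventually_mem (hsm.Icc_mem_nhds_apply ht₀)] with h hh
    rw [hFFinv _ hh, hFinvF t₀ (Ioo_subset_Icc_self ht₀), hF't₀, sub_zero, add_sub_cancel_left]
  constructor
  · have hshift : Tendsto (F t₀ + ·) (𝓝[>] 0) (𝓝[>] (F t₀)) :=
      map_add_left_nhdsGT.trans_le (by rw [add_zero])
    exact (hright.comp ((tendsto_nhdsGT_of_invOn_Icc hsm hFc hFinvF hFFinv ht₀).comp hshift)).congr'
      (hquot.filter_mono nhdsWithin_le_nhds)
  · have hshift : Tendsto (F t₀ + ·) (𝓝[<] 0) (𝓝[<] (F t₀)) :=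
      map_add_left_nhdsLT.trans_le (by rw [add_zero])
    exact (hleft.comp ((tendsto_nhdsLT_of_invOn_Icc hsm hFc hFinvF hFFinv ht₀).comp hshift)).congr'
      (hquot.filter_mono nhdsWithin_le_nhds)

/-- Vertical half-tangent (cusp) of `v = F' ∘ F⁻¹` at `x₀ = F t₀` : the
one-sided difference quotients tend to `+∞` as `h → 0⁺` and to `−∞` as
`h → 0⁻`. -/
theorem stmt_5 (T : ℝ) (hT : 0 < T)
    (F F' F'' : ℝ → ℝ) (F₃ : ℝ)
    (hsm : StrictMonoOn F (Icc 0 T))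
    (hd1 : ∀ t ∈ Icc 0 T, HasDerivWithinAt F (F' t) (Icc 0 T) t)
    (hd2 : ∀ t ∈ Icc 0 T, HasDerivWithinAt F' (F'' t) (Icc 0 T) t)
    (hF''cont : ContinuousOn F'' (Icc 0 T))
    (t₀ : ℝ) (ht₀ : t₀ ∈ Ioo 0 T) (hF't₀ : F' t₀ = 0) (hF''t₀ : F'' t₀ = 0)
    (hd3 : HasDerivWithinAt F'' F₃ (Icc 0 T) t₀) (hF₃ : 0 < F₃)
    (Finv : ℝ → ℝ)
    (hFinvF : ∀ t ∈ Icc 0 T, Finv (F t) = t)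
    (hFFinv : ∀ x ∈ Icc (F 0) (F T), F (Finv x) = x) :
    Tendsto (fun h : ℝ => (F' (Finv (F t₀ + h)) - F' (Finv (F t₀))) / h)
        (nhdsWithin 0 (Ioi 0)) atTop ∧
    Tendsto (fun h : ℝ => (F' (Finv (F t₀ + h)) - F' (Finv (F t₀))) / h)
        (nhdsWithin 0 (Iio 0)) atBot :=
  stmt_5_general T F F' F'' F₃ hsm hd1 hd2 t₀ ht₀ hF't₀ hF''t₀ hd3 hF₃ Finv hFinvF hFFinv
end

section
/- Let F : [0,T] → [0,x_f] be C², increasing, surjective with F(0)=0, constant exactly on a maximal nondegenerate interval [t₀,t₁] ⊂ (0,T), and suppose the excised function G (defined by G(t)=F(t) for t ≤ t₀ and G(t)=F(t+t₁−t₀) for t ≥ t₀) is strictly increasing, C² with G'(t₀)=0, and G'''(t₀) exists and is nonzero. Then v = F' ∘ F⁻¹ (with F⁻¹ the generalized inverse) is not differentiable at x₀ = F(t₀). -/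
/-!
Along the motion the position-indexed speed `v = F' ∘ F⁻¹` satisfies `v (F t) = F' t`, because
`F⁻¹` picks the first time of a flat piece of `F` and `F'` vanishes on flat pieces. So after the
stop, `F` solves the autonomous equation `x' = v x` from the rest point `x₀ = F t₁`, where
`v x₀ = 0`. If `v` were differentiable at `x₀`, then `|v x| ≤ K |x - x₀|` near `x₀`, and Grönwall's
inequality would keep `F` at `x₀` for a while after `t₁`, contradicting the maximality of the stop.
-/

open Set Filter Topology

lemma HasDerivWithinAt.eq_zero_of_forall_Icc_eq {F : ℝ → ℝ} {f' c d x y : ℝ} {s : Set ℝ}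
    (h : HasDerivWithinAt F f' s x) (hsub : Icc c d ⊆ s) (hcd : c < d) (hx : x ∈ Icc c d)
    (hconst : ∀ u ∈ Icc c d, F u = y) : f' = 0 :=
  (uniqueDiffOn_Icc hcd x hx).eq_deriv _ (h.mono hsub)
    ((hasDerivWithinAt_const x _ y).congr hconst (hconst x hx))

lemma MonotoneOn.deriv_sInf_fiber_eq {F F' : ℝ → ℝ} {a b t : ℝ} (hmono : MonotoneOn F (Icc a b))
    (hF : ∀ t ∈ Icc a b, HasDerivWithinAt F (F' t) (Icc a b) t) (ht : t ∈ Icc a b) :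
    F' (sInf {u | u ∈ Icc a b ∧ F u = F t}) = F' t := by
  set m := sInf {u | u ∈ Icc a b ∧ F u = F t}
  have hbdd : BddBelow {u | u ∈ Icc a b ∧ F u = F t} := ⟨a, fun u hu => hu.1.1⟩
  have hclosed : IsClosed {u | u ∈ Icc a b ∧ F u = F t} :=
    (HasDerivWithinAt.continuousOn hF).preimage_isClosed_of_isClosed isClosed_Icc
      isClosed_singleton
  obtain ⟨hm, hFm⟩ : m ∈ {u | u ∈ Icc a b ∧ F u = F t} := hclosed.csInf_mem ⟨t, ht, rfl⟩ hbdd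
  rcases (csInf_le hbdd ⟨ht, rfl⟩ : m ≤ t).eq_or_lt with hmt | hmt
  · exact congrArg F' hmt
  have hsub : Icc m t ⊆ Icc a b := Icc_subset_Icc hm.1 ht.2
  have hflat : ∀ u ∈ Icc m t, F u = F t := fun u hu =>
    le_antisymm (hmono (hsub hu) ht hu.2) (hFm ▸ hmono hm (hsub hu) hu.1)
  rw [(hF m hm).eq_zero_of_forall_Icc_eq hsub hmt (left_mem_Icc.2 hmt.le) hflat,
    (hF t ht).eq_zero_of_forall_Icc_eq hsub hmt (right_mem_Icc.2 hmt.le) hflat]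

lemma eqOn_const_of_abs_deriv_le_mul_abs_sub {f f' : ℝ → ℝ} {a b K : ℝ}
    (hf : ∀ t ∈ Icc a b, HasDerivWithinAt f (f' t) (Icc a b) t)
    (hbound : ∀ t ∈ Ico a b, |f' t| ≤ K * |f t - f a|) :
    EqOn f (fun _ => f a) (Icc a b) := by
  intro t ht
  have hgron := norm_le_gronwallBound_of_norm_deriv_right_le (f := fun t => f t - f a)
    (δ := 0) (ε := 0) (HasDerivWithinAt.continuousOn fun t ht => (hf t ht).sub_const (f a))
    (fun t ht => ((hf t (Ico_subset_Icc_self ht)).sub_const (f a)).mono_of_mem_nhdsWithin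
      (mem_of_superset (Icc_mem_nhdsGE ht.2) (Icc_subset_Icc_left ht.1)))
    (by simp) (fun t ht => by simpa using hbound t ht) t ht
  rw [gronwallBound_ε0_δ0] at hgron
  simpa [sub_eq_zero] using hgron

lemma exists_eqOn_const_of_hasDerivWithinAt_comp {x u : ℝ → ℝ} {s : Set ℝ} {a b : ℝ}
    (hab : a < b) (hx : ∀ t ∈ Icc a b, HasDerivWithinAt x (u (x t)) (Icc a b) t)
    (hxs : MapsTo x (Icc a b) s) (hu : DifferentiableWithinAt ℝ u s (x a)) (hu0 : u (x a) = 0) :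
    ∃ c ∈ Ioc a b, EqOn x (fun _ => x a) (Icc a c) := by
  obtain ⟨K, hK⟩ := hu.isBigO_sub.bound
  have hxa : Tendsto x (𝓝[≥] a) (𝓝[s] (x a)) := by
    rw [← nhdsWithin_Icc_eq_nhdsGE hab]
    exact tendsto_nhdsWithin_iff.2 ⟨(hx a (left_mem_Icc.2 hab.le)).continuousWithinAt,
      eventually_mem_nhdsWithin.mono hxs⟩
  obtain ⟨c, hac, hc⟩ := mem_nhdsGE_iff_exists_Icc_subset.1 (hxa.eventually hK)
  refine ⟨min c b, ⟨lt_min hac hab, min_le_right c b⟩, ?_⟩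
  have hsub : Icc a (min c b) ⊆ Icc a b := Icc_subset_Icc_right (min_le_right c b)
  refine eqOn_const_of_abs_deriv_le_mul_abs_sub (K := K)
    (fun t ht => (hx t (hsub ht)).mono hsub) fun t ht => ?_
  simpa [hu0] using hc (Icc_subset_Icc_right (min_le_left c b) (Ico_subset_Icc_self ht))

theorem stmt_13_general (T xf : ℝ)
    (F F' : ℝ → ℝ)
    (hmono : MonotoneOn F (Icc 0 T))
    (hd1 : ∀ t ∈ Icc 0 T, HasDerivWithinAt F (F' t) (Icc 0 T) t)
    (hF0 : F 0 = 0) (hFT : F T = xf)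
    (t₀ t₁ : ℝ) (ht₀ : 0 < t₀) (ht₀₁ : t₀ < t₁) (ht₁ : t₁ < T)
    (hconst : ∀ t ∈ Icc t₀ t₁, F t = F t₀)
    (hmax : ∀ t ∈ Icc 0 T, F t = F t₀ → t ∈ Icc t₀ t₁)
    (Finv : ℝ → ℝ)
    (hFinv : ∀ x, Finv x = sInf {t | t ∈ Icc 0 T ∧ F t = x}) :
    ¬ DifferentiableWithinAt ℝ (fun x => F' (Finv x)) (Icc 0 xf) (F t₀) := by
  intro hdiff
  have hsub : Icc t₁ T ⊆ Icc 0 T := Icc_subset_Icc_left (by linarith)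
  have hspeed : ∀ t ∈ Icc 0 T, F' (Finv (F t)) = F' t := fun t ht =>
    hFinv (F t) ▸ hmono.deriv_sInf_fiber_eq hd1 ht
  have hFt₁ : F t₁ = F t₀ := hconst t₁ (right_mem_Icc.2 ht₀₁.le)
  have hrest : F' (Finv (F t₁)) = 0 := by
    rw [hspeed t₁ (hsub (left_mem_Icc.2 ht₁.le))]
    exact (hd1 t₁ (hsub (left_mem_Icc.2 ht₁.le))).eq_zero_of_forall_Icc_eq
      (Icc_subset_Icc ht₀.le ht₁.le) ht₀₁ (right_mem_Icc.2 ht₀₁.le) hconst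
  obtain ⟨c, hc, hFc⟩ := exists_eqOn_const_of_hasDerivWithinAt_comp (s := Icc 0 xf) ht₁
    (fun t ht => hspeed t (hsub ht) ▸ (hd1 t (hsub ht)).mono hsub)
    (fun t ht => ⟨hF0 ▸ hmono (left_mem_Icc.2 (by linarith)) (hsub ht) (by linarith [ht.1]),
      hFT ▸ hmono (hsub ht) (right_mem_Icc.2 (by linarith)) ht.2⟩)
    (hFt₁ ▸ hdiff) hrest
  have hstop := hmax c ⟨by linarith [hc.1], hc.2⟩ (hFt₁ ▸ hFc (right_mem_Icc.2 hc.1.le))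
  exact hc.1.not_ge hstop.2

/-- Case (H₂): if `F` is C², increasing, surjective, constant exactly on a
maximal nondegenerate interval `[t₀, t₁] ⊂ (0,T)`, and the excised function
`G` is strictly increasing, C², with `G' t₀ = 0` and nonzero third derivative
at `t₀`, then `v = F' ∘ F⁻¹` is not differentiable at `x₀ = F t₀`. -/
theorem stmt_13 (T xf : ℝ) (hT : 0 < T) (hxf : 0 < xf)
    (F F' F'' : ℝ → ℝ)
    (hmono : MonotoneOn F (Icc 0 T))
    (hd1 : ∀ t ∈ Icc 0 T, HasDerivWithinAt F (F' t) (Icc 0 T) t)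
    (hd2 : ∀ t ∈ Icc 0 T, HasDerivWithinAt F' (F'' t) (Icc 0 T) t)
    (hF''cont : ContinuousOn F'' (Icc 0 T))
    (hF0 : F 0 = 0) (hFT : F T = xf)
    (t₀ t₁ : ℝ) (ht₀ : 0 < t₀) (ht₀₁ : t₀ < t₁) (ht₁ : t₁ < T)
    (hconst : ∀ t ∈ Icc t₀ t₁, F t = F t₀)
    (hmax : ∀ t ∈ Icc 0 T, F t = F t₀ → t ∈ Icc t₀ t₁)
    (G G' G'' : ℝ → ℝ) (G₃ : ℝ)
    (hG1 : ∀ t ∈ Icc 0 t₀, G t = F t)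
    (hG2 : ∀ t ∈ Icc t₀ (T - (t₁ - t₀)), G t = F (t + (t₁ - t₀)))
    (hGsm : StrictMonoOn G (Icc 0 (T - (t₁ - t₀))))
    (hGd1 : ∀ t ∈ Icc 0 (T - (t₁ - t₀)), HasDerivWithinAt G (G' t) (Icc 0 (T - (t₁ - t₀))) t)
    (hGd2 : ∀ t ∈ Icc 0 (T - (t₁ - t₀)), HasDerivWithinAt G' (G'' t) (Icc 0 (T - (t₁ - t₀))) t)
    (hG''cont : ContinuousOn G'' (Icc 0 (T - (t₁ - t₀))))
    (hG't₀ : G' t₀ = 0)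
    (hGd3 : HasDerivWithinAt G'' G₃ (Icc 0 (T - (t₁ - t₀))) t₀) (hG₃ : G₃ ≠ 0)
    (Finv : ℝ → ℝ)
    (hFinv : ∀ x, Finv x = sInf {t | t ∈ Icc 0 T ∧ F t = x}) :
    ¬ DifferentiableWithinAt ℝ (fun x => F' (Finv x)) (Icc 0 xf) (F t₀) :=
  stmt_13_general T xf F F' hmono hd1 hF0 hFT t₀ t₁ ht₀ ht₀₁ ht₁ hconst hmax Finv hFinv
end
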